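/- arXiv:2109.03288 — 6 statements merged into one kernel-verified Lean document; each statement's English description precedes it below -/
import Mathlib

section
/- For every prime q and all integers k ≥ 1 and n ≥ 1, q divides σ_k(n) if and only if q divides σ_{gcd(k, q−1)}(n). -/
open Filter Topology

def sigmak (k n : ℕ) : ℕ := ∑ d ∈ n.divisors, d ^ k

lemma geom_zero_iff {q : ℕ} [Fact q.Prime] (x : ZMod q) {m : ℕ} (hm : 0 < m) :
    (∑ i ∈ Finset.range m, x ^ i = 0) ↔
      ((orderOf x = 1 ∧ q ∣ m) ∨ (1 < orderOf x ∧ orderOf x ∣ m)) := by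
  rcases eq_or_ne x 0 with rfl | hx0
  · have hs : ∑ i ∈ Finset.range m, (0 : ZMod q) ^ i = 1 := by
      rw [Finset.sum_eq_single 0]
      · exact pow_zero 0
      · intro i _ hi; exact zero_pow hi
      · intro h; exact absurd (Finset.mem_range.mpr hm) h
    have ho : orderOf (0 : ZMod q) = 0 := by
      rw [orderOf_eq_zero_iff, isOfFinOrder_iff_pow_eq_one]
      rintro ⟨n, hn, h1⟩
      rw [zero_pow hn.ne'] at h1
      exact zero_ne_one h1
    simp [hs, ho]
  · have hfin : IsOfFinOrder x := isOfFinOrder_iff_pow_eq_one.mpr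
      ⟨q - 1, Nat.sub_pos_of_lt (Fact.out : q.Prime).one_lt,
        ZMod.pow_card_sub_one_eq_one hx0⟩
    have hopos : 0 < orderOf x := hfin.orderOf_pos
    rcases eq_or_ne x 1 with rfl | hx1
    · have hs : ∑ i ∈ Finset.range m, (1 : ZMod q) ^ i = (m : ZMod q) := by
        simp
      rw [hs, ZMod.natCast_eq_zero_iff]
      simp [orderOf_one]
    · have hne1 : orderOf x ≠ 1 := fun h => hx1 (orderOf_eq_one_iff.mp h)
      have h1lt : 1 < orderOf x := by omega
      have hsub : x - 1 ≠ 0 := sub_ne_zero.mpr hx1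
      constructor
      · intro h0
        refine Or.inr ⟨h1lt, orderOf_dvd_of_pow_eq_one ?_⟩
        have := geom_sum_mul x m
        rw [h0, zero_mul] at this
        have : x ^ m - 1 = 0 := this.symm
        linear_combination this
      · rintro (⟨h1, _⟩ | ⟨_, hdvd⟩)
        · exact absurd h1 hne1
        · have hx : x ^ m = 1 := orderOf_dvd_iff_pow_eq_one.mp hdvd
          have := geom_sum_mul x m
          rw [hx, sub_self] at this
          rcases mul_eq_zero.mp this with h | h
          · exact h
          · exact absurd h hsub

lemma order_pow_eq {q : ℕ} [Fact q.Prime] (x : ZMod q) {k : ℕ} (hk : k ≠ 0) :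
    orderOf (x ^ k) = orderOf (x ^ Nat.gcd k (q - 1)) := by
  have hg : Nat.gcd k (q - 1) ≠ 0 :=
    (Nat.gcd_pos_of_pos_left _ (Nat.pos_of_ne_zero hk)).ne'
  rcases eq_or_ne x 0 with rfl | hx
  · rw [zero_pow hk, zero_pow hg]
  · have hord : orderOf x ∣ q - 1 :=
      orderOf_dvd_of_pow_eq_one (ZMod.pow_card_sub_one_eq_one hx)
    rw [orderOf_pow' x hk, orderOf_pow' x hg]
    congr 1
    rw [Nat.gcd_comm k (q - 1), ← Nat.gcd_assoc, Nat.gcd_eq_left hord]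

lemma sigmak_primePow_cast {q : ℕ} [Fact q.Prime] {p : ℕ} (hp : p.Prime) (j a : ℕ) :
    ((sigmak j (p ^ a) : ℕ) : ZMod q)
      = ∑ i ∈ Finset.range (a + 1), ((p : ZMod q) ^ j) ^ i := by
  have h1 : sigmak j (p ^ a) = ArithmeticFunction.sigma j (p ^ a) := by
    rw [ArithmeticFunction.sigma_apply]; rfl
  rw [h1, ArithmeticFunction.sigma_apply_prime_pow hp]
  push_cast
  refine Finset.sum_congr rfl fun i _ => ?_
  rw [← pow_mul, mul_comm]

lemma primepow_iff {q : ℕ} [Fact q.Prime] {p : ℕ} (hp : p.Prime) {k : ℕ}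
    (hk : k ≠ 0) (a : ℕ) :
    (((sigmak k (p ^ a) : ℕ) : ZMod q) = 0) ↔
      (((sigmak (Nat.gcd k (q - 1)) (p ^ a) : ℕ) : ZMod q) = 0) := by
  rw [sigmak_primePow_cast hp, sigmak_primePow_cast hp,
    geom_zero_iff _ a.succ_pos, geom_zero_iff _ a.succ_pos,
    order_pow_eq (p : ZMod q) hk]

/-- For every prime `q` and all integers `k ≥ 1` and `n ≥ 1`,
`q ∣ σ_k(n)` iff `q ∣ σ_{gcd(k, q−1)}(n)`. -/
theorem statement5 (q k n : ℕ) (hq : q.Prime) (hk : 1 ≤ k) (hn : 1 ≤ n) :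
    q ∣ sigmak k n ↔ q ∣ sigmak (Nat.gcd k (q - 1)) n := by
  haveI : Fact q.Prime := ⟨hq⟩
  have hn0 : n ≠ 0 := by omega
  have key : ∀ j : ℕ, (q ∣ sigmak j n ↔
      ∃ p ∈ n.factorization.support,
        ((sigmak j (p ^ n.factorization p) : ℕ) : ZMod q) = 0) := by
    intro j
    rw [← ZMod.natCast_eq_zero_iff]
    have h1 : sigmak j n = ArithmeticFunction.sigma j n := by
      rw [ArithmeticFunction.sigma_apply]; rfl
    have h2 : ArithmeticFunction.sigma j n
        = n.factorization.prod fun p a => ArithmeticFunction.sigma j (p ^ a) :=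
      ArithmeticFunction.IsMultiplicative.multiplicative_factorization _
        ArithmeticFunction.isMultiplicative_sigma hn0
    have h3 : ((sigmak j n : ℕ) : ZMod q)
        = ∏ p ∈ n.factorization.support,
            ((sigmak j (p ^ n.factorization p) : ℕ) : ZMod q) := by
      rw [h1, h2, Finsupp.prod, Nat.cast_prod]
      refine Finset.prod_congr rfl fun p _ => ?_
      congr 1
    rw [h3, Finset.prod_eq_zero_iff]
  rw [key k, key (Nat.gcd k (q - 1))]
  refine exists_congr fun p => and_congr_right fun hp => ?_
  have hpp : p.Prime := Nat.prime_of_mem_primeFactors (by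
    rwa [← Nat.support_factorization])
  exact primepow_iff hpp (by omega) _
end

section
/- Let q be an odd prime and m a divisor of q−1; for a prime p ≠ q let g_p be the multiplicative order of p^m modulo q. Then for every complex s with Re(s) > 1, (1−q^{−s})^{−1} · ∏_{p ≠ q} (1−p^{−s·g_p})^{−(q−1)/(m·g_p)} = ζ(s) · ∏_{χ ∈ X_m^*} L(s, χ), where ζ is the Riemann zeta function (both sides converge absolutely). -/
open Filter Topology

/-- The multiplicative order `g_p` of `p^m` modulo `q`. -/
noncomputable def gp (q m p : ℕ) : ℕ := orderOf ((p : ZMod q) ^ m)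

/-- The Dirichlet L-function attached to a Dirichlet character mod `q` (junk value for `q = 0`). -/
noncomputable def Lfun {q : ℕ} (χ : DirichletCharacter ℂ q) (s : ℂ) : ℂ :=
  if h : q = 0 then 0 else
    haveI : NeZero q := ⟨h⟩
    DirichletCharacter.LFunction χ s

/-!
Write `q - 1 = m n` and let `γ` generate `(ℤ/qℤ)ˣ`. A character is trivial on `C_m` iff
`χ(γ)^n = 1`, so `X_m` consists of the powers `χ₀^j`, `j < n`, of a character `χ₀` sending `γ` to
a primitive `n`-th root of unity. For `p ≠ q` the order of `χ₀(p)` equals the order `g_p` of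
`p^m`, so the values `χ(p)`, `χ ∈ X_m`, run `n / g_p` times through the `g_p`-th roots of unity and
`∏_{χ ∈ X_m} (1 - χ(p) t) = (1 - t^{g_p})^{n / g_p}`. Hence the left-hand Euler product is the
product of the Euler products of the `L(s, χ)`, `χ ∈ X_m`, and `L(s, 1) = (1 - q^{-s}) ζ(s)`.
-/

open Finset

lemma IsPrimitiveRoot.prod_one_sub_pow_mul {R : Type*} [CommRing R] [IsDomain R] {ζ : R}
    {n : ℕ} (hζ : IsPrimitiveRoot ζ n) (hn : 0 < n) (t : R) :
    ∏ i ∈ range n, (1 - ζ ^ i * t) = 1 - t ^ n := by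
  simpa [Polynomial.eval_prod] using
    congrArg (Polynomial.eval 1) (X_pow_sub_C_eq_prod hζ hn (rfl : t ^ n = t ^ n)).symm

lemma prod_range_mul_one_sub_pow_mul {R : Type*} [CommRing R] {w : R} {g : ℕ} (hw : w ^ g = 1)
    (t : R) (c : ℕ) :
    ∏ j ∈ range (g * c), (1 - w ^ j * t) = (∏ j ∈ range g, (1 - w ^ j * t)) ^ c := by
  induction c with
  | zero => simp
  | succ c ih =>
    rw [Nat.mul_succ, prod_range_add, ih, pow_succ]
    simp only [pow_add, pow_mul, hw, one_pow, one_mul]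

lemma prod_range_one_sub_pow_mul {R : Type*} [CommRing R] [IsDomain R] {w : R} {n : ℕ}
    (hn : 0 < n) (hw : w ^ n = 1) (t : R) :
    ∏ j ∈ range n, (1 - w ^ j * t) = (1 - t ^ orderOf w) ^ (n / orderOf w) := by
  have hg : 0 < orderOf w := orderOf_pos_iff.mpr (isOfFinOrder_iff_pow_eq_one.mpr ⟨n, hn, hw⟩)
  conv_lhs => rw [← Nat.mul_div_cancel' (orderOf_dvd_of_pow_eq_one hw)]
  rw [prod_range_mul_one_sub_pow_mul (pow_orderOf_eq_one w),
    (IsPrimitiveRoot.orderOf w).prod_one_sub_pow_mul hg]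

lemma ZMod.orderOf_eq_sub_one_of_forall_mem_zpowers {q : ℕ} [Fact q.Prime] {γ : (ZMod q)ˣ}
    (hγ : ∀ u, u ∈ Subgroup.zpowers γ) : orderOf γ = q - 1 := by
  rw [orderOf_eq_card_of_forall_mem_zpowers hγ, Nat.card_eq_fintype_card, ZMod.card_units]

namespace DirichletCharacter

variable {q : ℕ} [Fact q.Prime] {γ : (ZMod q)ˣ}

lemma exists_isPrimitiveRoot_apply_generator (hγ : ∀ u, u ∈ Subgroup.zpowers γ) {n : ℕ}
    (hn : n ∣ q - 1) : ∃ χ₀ : DirichletCharacter ℂ q, IsPrimitiveRoot (χ₀ γ) n := by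
  have hn₀ : n ≠ 0 := by
    rintro rfl; have := (Fact.out : q.Prime).two_le; rw [zero_dvd_iff] at hn; omega
  obtain ⟨χ₀, hχ₀⟩ := MulChar.exists_mulChar_orderOf (ZMod q) (by rwa [ZMod.card])
    (Complex.isPrimitiveRoot_exp n hn₀)
  refine ⟨χ₀, IsPrimitiveRoot.iff_orderOf.mpr (hχ₀ ▸ orderOf_eq_orderOf_iff.mpr fun e => ?_)⟩
  rw [MulChar.eq_iff hγ, MulChar.pow_apply_coe, MulChar.one_apply_coe]

lemma forall_pow_eq_one_apply_eq_one_iff {m n : ℕ} (hmn : q - 1 = m * n)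
    (hγ : ∀ u, u ∈ Subgroup.zpowers γ) (χ : DirichletCharacter ℂ q) :
    (∀ a : ZMod q, a ^ m = 1 → χ a = 1) ↔ χ γ ^ n = 1 := by
  have hm : m ≠ 0 := by rintro rfl; have := (Fact.out : q.Prime).one_lt; omega
  constructor
  · intro h
    rw [← map_pow, ← Units.val_pow_eq_pow_val]
    apply h
    rw [← Units.val_pow_eq_pow_val, ← pow_mul, mul_comm, ← hmn,
      ZMod.units_pow_card_sub_one_eq_one, Units.val_one]
  · intro h a ha
    obtain ⟨k, hk : γ ^ k = _⟩ :=
      mem_powers_iff_mem_zpowers.mpr (hγ (IsUnit.of_pow_eq_one ha hm).unit)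
    have hnk : n ∣ k := by
      refine (Nat.mul_dvd_mul_iff_left (Nat.pos_of_ne_zero hm)).mp ?_
      rw [← hmn, ← ZMod.orderOf_eq_sub_one_of_forall_mem_zpowers hγ, mul_comm m]
      refine orderOf_dvd_of_pow_eq_one (Units.ext ?_)
      rw [pow_mul, hk, Units.val_pow_eq_pow_val, IsUnit.unit_spec, ha, Units.val_one]
    obtain ⟨c, rfl⟩ := hnk
    rw [← IsUnit.unit_spec (IsUnit.of_pow_eq_one ha hm), ← hk, Units.val_pow_eq_pow_val, map_pow,
      pow_mul, h, one_pow]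

variable {n : ℕ} {χ₀ : DirichletCharacter ℂ q}

lemma apply_generator_pow_eq_one_iff [NeZero n] (hγ : ∀ u, u ∈ Subgroup.zpowers γ)
    (hχ₀ : IsPrimitiveRoot (χ₀ γ) n) (χ : DirichletCharacter ℂ q) :
    χ γ ^ n = 1 ↔ ∃ j < n, χ₀ ^ j = χ := by
  constructor
  · intro h
    obtain ⟨j, hj, hχ⟩ := hχ₀.eq_pow_of_pow_eq_one h
    exact ⟨j, hj, (MulChar.eq_iff hγ _ _).mpr (by rw [MulChar.pow_apply_coe, hχ])⟩
  · rintro ⟨j, -, rfl⟩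
    rw [MulChar.pow_apply_coe, ← pow_mul, mul_comm, pow_mul, hχ₀.pow_eq_one, one_pow]

lemma injOn_pow_of_isPrimitiveRoot (hχ₀ : IsPrimitiveRoot (χ₀ γ) n) :
    Set.InjOn (χ₀ ^ ·) (range n) :=
  fun i hi j hj hij => hχ₀.pow_inj (mem_range.mp hi) (mem_range.mp hj) <| by
    simpa only [MulChar.pow_apply_coe] using congrArg (fun χ : DirichletCharacter ℂ q => χ γ) hij

lemma orderOf_apply_eq_orderOf_pow {m : ℕ} (hmn : q - 1 = m * n)
    (hγ : ∀ u, u ∈ Subgroup.zpowers γ) (hχ₀ : IsPrimitiveRoot (χ₀ γ) n) (u : (ZMod q)ˣ) :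
    orderOf (χ₀ u) = orderOf (u ^ m) := by
  have hm : 0 < m := Nat.pos_of_ne_zero <| by
    rintro rfl; have := (Fact.out : q.Prime).one_lt; omega
  obtain ⟨k, rfl⟩ := mem_powers_iff_mem_zpowers.mpr (hγ u)
  refine orderOf_eq_orderOf_iff.mpr fun e => ?_
  rw [Units.val_pow_eq_pow_val, map_pow, ← pow_mul, hχ₀.pow_eq_one_iff_dvd, ← pow_mul, ← pow_mul,
    ← orderOf_dvd_iff_pow_eq_one, ZMod.orderOf_eq_sub_one_of_forall_mem_zpowers hγ, hmn,
    mul_left_comm k m e, Nat.mul_dvd_mul_iff_left hm]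

lemma prod_range_one_sub_pow_apply_mul [NeZero n] {m : ℕ} (hmn : q - 1 = m * n)
    (hγ : ∀ u, u ∈ Subgroup.zpowers γ) (hχ₀ : IsPrimitiveRoot (χ₀ γ) n) {a : ZMod q}
    (ha : IsUnit a) (x : ℂ) :
    ∏ j ∈ range n, (1 - (χ₀ ^ j) a * x) =
      (1 - x ^ orderOf (a ^ m)) ^ ((q - 1) / (m * orderOf (a ^ m))) := by
  have hm : 0 < m := Nat.pos_of_ne_zero <| by
    rintro rfl; have := (Fact.out : q.Prime).one_lt; omega
  obtain ⟨u, rfl⟩ := ha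
  have hord := orderOf_apply_eq_orderOf_pow hmn hγ hχ₀ u
  have hw : χ₀ u ^ n = 1 := by
    rw [← orderOf_dvd_iff_pow_eq_one, hord]
    exact orderOf_dvd_of_pow_eq_one (by rw [← pow_mul, ← hmn, ZMod.units_pow_card_sub_one_eq_one])
  simp_rw [MulChar.pow_apply_coe]
  rw [prod_range_one_sub_pow_mul (NeZero.pos n) hw, hord, ← Units.val_pow_eq_pow_val,
    orderOf_units, hmn, Nat.mul_div_mul_left _ _ hm]

lemma prod_image_pow_inv_one_sub_mul_cpow [NeZero n] {m : ℕ} (hmn : q - 1 = m * n)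
    (hγ : ∀ u, u ∈ Subgroup.zpowers γ) (hχ₀ : IsPrimitiveRoot (χ₀ γ) n) (p : Nat.Primes)
    (s : ℂ) :
    ∏ χ ∈ (range n).image (χ₀ ^ ·), (1 - χ p * (p : ℂ) ^ (-s))⁻¹ =
      if (p : ℕ) = q then 1 else
        ((1 - (p : ℂ) ^ (-(s * (gp q m p : ℂ))))⁻¹) ^ ((q - 1) / (m * gp q m p)) := by
  split_ifs with hpq
  · refine prod_eq_one fun χ _ => ?_
    rw [hpq, ZMod.natCast_self, MulChar.map_zero, zero_mul, sub_zero, inv_one]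
  · have hp : IsUnit (p : ZMod q) :=
      (ZMod.isUnit_iff_coprime _ _).mpr ((Nat.coprime_primes p.prop Fact.out).mpr hpq)
    rw [prod_image (injOn_pow_of_isPrimitiveRoot hχ₀), prod_inv_distrib,
      prod_range_one_sub_pow_apply_mul hmn hγ hχ₀ hp, ← Complex.cpow_nat_mul, inv_pow, gp,
      mul_neg, mul_comm]

end DirichletCharacter

lemma hasProd_Lfun {q : ℕ} [NeZero q] (χ : DirichletCharacter ℂ q) {s : ℂ} (hs : 1 < s.re) :
    HasProd (fun p : Nat.Primes => (1 - χ p * (p : ℂ) ^ (-s))⁻¹) (Lfun χ s) := by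
  rw [Lfun, dif_neg (NeZero.ne q), DirichletCharacter.LFunction_eq_LSeries χ hs]
  exact DirichletCharacter.LSeries_eulerProduct_hasProd χ hs

lemma Lfun_one_eq_mul_riemannZeta {q : ℕ} (hq : q.Prime) {s : ℂ} (hs : s ≠ 1) :
    Lfun (1 : DirichletCharacter ℂ q) s = (1 - (q : ℂ) ^ (-s)) * riemannZeta s := by
  have : NeZero q := ⟨hq.ne_zero⟩
  rw [Lfun, dif_neg hq.ne_zero]
  exact (DirichletCharacter.LFunctionTrivChar_eq_mul_riemannZeta hs).trans <| by
    rw [hq.primeFactors, prod_singleton]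

theorem statement7_general (q m : ℕ) (hq : q.Prime) (hm : m ∣ q - 1)
    (s : ℂ) (hs : 1 < s.re) :
    Multipliable (fun p : Nat.Primes =>
      if (p : ℕ) = q then 1 else
        ((1 - (p : ℂ) ^ (-(s * (gp q m (p : ℕ) : ℂ))))⁻¹) ^ ((q - 1) / (m * gp q m (p : ℕ)))) ∧
    (1 - (q : ℂ) ^ (-s))⁻¹ *
        (∏' p : Nat.Primes,
          if (p : ℕ) = q then 1 else
            ((1 - (p : ℂ) ^ (-(s * (gp q m (p : ℕ) : ℂ))))⁻¹) ^ ((q - 1) / (m * gp q m (p : ℕ)))) =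
      riemannZeta s *
        ∏ᶠ χ ∈ {χ : DirichletCharacter ℂ q | χ ≠ 1 ∧ ∀ a : ZMod q, a ^ m = 1 → χ a = 1},
          Lfun χ s := by
  have : Fact q.Prime := ⟨hq⟩
  obtain ⟨γ, hγ⟩ := IsCyclic.exists_generator (α := (ZMod q)ˣ)
  obtain ⟨n, hmn⟩ := hm
  have : NeZero n := ⟨by rintro rfl; have := hq.two_le; omega⟩
  obtain ⟨χ₀, hχ₀⟩ :=
    DirichletCharacter.exists_isPrimitiveRoot_apply_generator hγ (Dvd.intro_left m hmn.symm)
  set X := (range n).image (χ₀ ^ ·)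
  have hX : ∀ χ, χ ∈ X ↔ ∀ a : ZMod q, a ^ m = 1 → χ a = 1 := fun χ => by
    rw [DirichletCharacter.forall_pow_eq_one_apply_eq_one_iff hmn hγ,
      DirichletCharacter.apply_generator_pow_eq_one_iff hγ hχ₀]
    simp [X]
  have hprod := funext (DirichletCharacter.prod_image_pow_inv_one_sub_mul_cpow hmn hγ hχ₀ · s) ▸
    hasProd_prod fun χ (_ : χ ∈ X) => hasProd_Lfun χ hs
  refine ⟨hprod.multipliable, ?_⟩
  have hXstar : {χ : DirichletCharacter ℂ q | χ ≠ 1 ∧ ∀ a : ZMod q, a ^ m = 1 → χ a = 1} =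
      ↑(X.erase 1) := by
    ext χ
    simp [hX, and_comm]
  have h1 : 1 ∈ X := mem_image.mpr ⟨0, mem_range.mpr (NeZero.pos n), pow_zero _⟩
  have hs1 : s ≠ 1 := by rintro rfl; simp at hs
  rw [hprod.tprod_eq, hXstar, finprod_mem_coe_finset, ← mul_prod_erase X _ h1,
    Lfun_one_eq_mul_riemannZeta hq hs1]
  field_simp [Complex.one_sub_prime_cpow_ne_zero hq hs]

/-- Euler product / L-series factorization of the Dedekind zeta function of
`K_m`: for `q` an odd prime, `m ∣ q−1` and `Re(s) > 1`,
`(1−q^{−s})^{−1} ∏_{p ≠ q} (1−p^{−s·g_p})^{−(q−1)/(m·g_p)} = ζ(s) ∏_{χ ∈ X_m^*} L(s,χ)`,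
all products converging absolutely. -/
theorem statement7 (q m : ℕ) (hq : q.Prime) (hq_odd : q ≠ 2) (hm : m ∣ q - 1)
    (s : ℂ) (hs : 1 < s.re) :
    Multipliable (fun p : Nat.Primes =>
      if (p : ℕ) = q then 1 else
        ((1 - (p : ℂ) ^ (-(s * (gp q m (p : ℕ) : ℂ))))⁻¹) ^ ((q - 1) / (m * gp q m (p : ℕ)))) ∧
    (1 - (q : ℂ) ^ (-s))⁻¹ *
        (∏' p : Nat.Primes,
          if (p : ℕ) = q then 1 else
            ((1 - (p : ℂ) ^ (-(s * (gp q m (p : ℕ) : ℂ))))⁻¹) ^ ((q - 1) / (m * gp q m (p : ℕ)))) =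
      riemannZeta s *
        ∏ᶠ χ ∈ {χ : DirichletCharacter ℂ q | χ ≠ 1 ∧ ∀ a : ZMod q, a ^ m = 1 → χ a = 1},
          Lfun χ s :=
  statement7_general q m hq hm s hs
end

section
/- Let q be an odd prime and k ≥ 1 an integer; put r = gcd(k, q−1), and for each prime p ≠ q let g_p be the multiplicative order of p^r modulo q and μ_p := q if g_p = 1, μ_p := g_p if g_p > 1. Then for every complex s with Re(s) > 1, ∑_{n ≥ 1, q ∤ σ_k(n)} n^{−s} = (1−q^{−s})^{−1} · ∏_{p ≠ q} (1−p^{−(μ_p−1)s}) / ((1−p^{−s})(1−p^{−μ_p·s})), both sides converging absolutely. -/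
open Filter Topology

/-- `μ_p = q` if `g_p = 1` and `μ_p = g_p` otherwise. -/
noncomputable def mup (q m p : ℕ) : ℕ := if gp q m p = 1 then q else gp q m p


/-- The Euler factor at `p ≠ q` of the Dirichlet series `T(s) = ∑_{q ∤ σ_k(n)} n^{−s}`. -/
noncomputable def Tfactor (q r : ℕ) (s : ℂ) (p : ℕ) : ℂ :=
  if p = q then 1 else
    (1 - (p : ℂ) ^ (-(((mup q r p - 1 : ℕ) : ℂ) * s))) /
      ((1 - (p : ℂ) ^ (-s)) * (1 - (p : ℂ) ^ (-((mup q r p : ℕ) * s : ℂ))))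

/-!
Since `q` is prime and `σ_k` is multiplicative, the condition `q ∤ σ_k(n)` is multiplicative
over coprime factors, so the restricted Dirichlet series has an Euler product whose factor at `p`
sums `p^{-es}` over the admissible exponents `e`. In `𝔽_q`, `σ_k(p^e) = ∑_{j ≤ e} t^j` with
`t = p^k`; this vanishes iff `e + 1` is divisible by the order of `t` (when `t ≠ 1`) or by `q`
(when `t = 1`), i.e. iff `μ_p ∣ e + 1`, and `p^k` has the same order as `p^{gcd(k, q-1)}` because
`p^{q-1} = 1`. For `p = q` we have `t = 0`, so every exponent is admissible and the factor is
`(1 - q^{-s})⁻¹`; for `p ≠ q`, summing the geometric series over the `e` with `μ_p ∤ e + 1`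
gives `(1 - p^{-(μ_p-1)s}) / ((1 - p^{-s})(1 - p^{-μ_p s}))`.
-/

theorem sigmak_eq_sigma (k n : ℕ) : sigmak k n = ArithmeticFunction.sigma k n := by
  rw [ArithmeticFunction.sigma_apply]; rfl

theorem sigmak_mul_of_coprime {m n : ℕ} (k : ℕ) (h : m.Coprime n) :
    sigmak k (m * n) = sigmak k m * sigmak k n := by
  simp only [sigmak_eq_sigma]
  exact ArithmeticFunction.isMultiplicative_sigma.map_mul_of_coprime h

theorem natCast_sigmak_prime_pow {R : Type*} [Semiring R] {p : ℕ} (hp : p.Prime) (k e : ℕ) :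
    (sigmak k (p ^ e) : R) = ∑ j ∈ Finset.range (e + 1), ((p : R) ^ k) ^ j := by
  rw [sigmak_eq_sigma, ArithmeticFunction.sigma_apply_prime_pow hp]
  push_cast
  simp only [← pow_mul, mul_comm]

theorem geom_sum_eq_zero_iff_orderOf_dvd {F : Type*} [Field F] {t : F} (ht : t ≠ 1) (m : ℕ) :
    ∑ j ∈ Finset.range m, t ^ j = 0 ↔ orderOf t ∣ m := by
  rw [geom_sum_eq ht, div_eq_zero_iff, sub_eq_zero, orderOf_dvd_iff_pow_eq_one]
  simp [sub_eq_zero, ht]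

theorem dvd_sigmak_prime_pow_iff {q p : ℕ} (hq : q.Prime) (hp : p.Prime) (k e : ℕ) :
    q ∣ sigmak k (p ^ e) ↔ mup q k p ∣ e + 1 := by
  have : Fact q.Prime := ⟨hq⟩
  rw [← ZMod.natCast_eq_zero_iff, natCast_sigmak_prime_pow hp, mup, gp]
  by_cases ht : (p : ZMod q) ^ k = 1
  · simpa [ht] using ZMod.natCast_eq_zero_iff (e + 1) q
  · rw [geom_sum_eq_zero_iff_orderOf_dvd ht, if_neg (mt orderOf_eq_one_iff.mp ht)]

theorem orderOf_pow_eq_orderOf_pow_gcd {G : Type*} [Monoid G] {x : G} {n : ℕ} (hx : x ^ n = 1)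
    (k : ℕ) : orderOf (x ^ k) = orderOf (x ^ k.gcd n) := by
  rcases eq_or_ne k 0 with rfl | hk
  · simp [hx]
  have hd : orderOf x ∣ n := orderOf_dvd_of_pow_eq_one hx
  have hgcd : (orderOf x).gcd (k.gcd n) = (orderOf x).gcd k := by
    rw [← Nat.gcd_assoc, Nat.gcd_eq_left ((Nat.gcd_dvd_left _ _).trans hd)]
  rw [orderOf_pow' x hk, orderOf_pow' x (Nat.gcd_ne_zero_left hk), hgcd]

theorem mup_gcd_card_sub_one {q p : ℕ} (hq : q.Prime) (hpq : ¬ q ∣ p) (k : ℕ) :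
    mup q (k.gcd (q - 1)) p = mup q k p := by
  have : Fact q.Prime := ⟨hq⟩
  have hp : (p : ZMod q) ^ (q - 1) = 1 :=
    ZMod.pow_card_sub_one_eq_one (by rwa [Ne, ZMod.natCast_eq_zero_iff])
  rw [mup, mup, gp, gp, orderOf_pow_eq_orderOf_pow_gcd hp k]

theorem mup_ne_zero {q p : ℕ} (hq : q.Prime) (hpq : ¬ q ∣ p) (m : ℕ) : mup q m p ≠ 0 := by
  have : Fact q.Prime := ⟨hq⟩
  have hp : ((p : ZMod q) ^ m) ^ (q - 1) = 1 :=
    ZMod.pow_card_sub_one_eq_one (pow_ne_zero _ (by rwa [Ne, ZMod.natCast_eq_zero_iff]))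
  have hdvd : gp q m p ∣ q - 1 := orderOf_dvd_of_pow_eq_one hp
  unfold mup
  split_ifs
  · exact hq.ne_zero
  · exact ne_zero_of_dvd_ne_zero (by have := hq.two_le; omega) hdvd

theorem mup_self {q k : ℕ} (hq : q.Prime) (hk : k ≠ 0) : mup q k q = 0 := by
  have : Fact q.Prime := ⟨hq⟩
  simp [mup, gp, zero_pow hk]

theorem not_dvd_sigmak_prime_pow_self {q k : ℕ} (hq : q.Prime) (hk : k ≠ 0) (e : ℕ) :
    ¬ q ∣ sigmak k (q ^ e) := by
  rw [dvd_sigmak_prime_pow_iff hq hq, mup_self hq hk, zero_dvd_iff]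
  exact e.succ_ne_zero

theorem tsum_ite_dvd_add_one_zero_pow {K : Type*} [NormedField K] [CompleteSpace K] {y : K}
    (hy : ‖y‖ < 1) {μ : ℕ} (hμ : μ ≠ 0) :
    ∑' e : ℕ, (if μ ∣ e + 1 then 0 else y ^ e) = (1 - y ^ (μ - 1)) / ((1 - y) * (1 - y ^ μ)) := by
  set F : ℕ → K := fun e => if μ ∣ e + 1 then 0 else y ^ e
  have hF : Summable F := by
    refine .of_norm_bounded (summable_geometric_of_lt_one (norm_nonneg y) hy) fun e => ?_
    simp only [F]
    split_ifs <;> simp [norm_pow]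
  have hshift (e : ℕ) : F (e + μ) = y ^ μ * F e := by
    simp only [F, show e + μ + 1 = e + 1 + μ by ring, Nat.dvd_add_self_right]
    split_ifs <;> simp [pow_add, mul_comm]
  have hhead : ∑ e ∈ Finset.range μ, F e = ∑ e ∈ Finset.range (μ - 1), y ^ e := by
    obtain ⟨ν, rfl⟩ := Nat.exists_eq_add_one_of_ne_zero hμ
    rw [Finset.sum_range_succ, Nat.add_sub_cancel]
    simp only [F, dvd_refl, if_true, add_zero]
    refine Finset.sum_congr rfl fun e he => if_neg fun h => ?_
    have := Nat.le_of_dvd e.succ_pos h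
    simp at he; omega
  have hy1 : 1 - y ≠ 0 := sub_ne_zero.mpr fun h => by simp [← h] at hy
  have hyμ : 1 - y ^ μ ≠ 0 := sub_ne_zero.mpr fun h => by
    simpa [← h] using (norm_pow y μ).trans_lt (pow_lt_one₀ (norm_nonneg y) hy hμ)
  -- `S = ∑_{e < μ-1} y^e + y^μ S`, solved for `S`
  have hsplit := hF.sum_add_tsum_nat_add μ
  simp only [hshift, tsum_mul_left, hhead] at hsplit
  rw [eq_div_iff (mul_ne_zero hy1 hyμ)]
  linear_combination (y - 1) * hsplit + mul_neg_geom_sum y (μ - 1)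

noncomputable def restrictedZetaSummand (P : ℕ → Prop) [DecidablePred P] (s : ℂ) (n : ℕ) : ℂ :=
  if 1 ≤ n ∧ P n then (n : ℂ) ^ (-s) else 0

section restrictedZetaSummand

variable (P : ℕ → Prop) [DecidablePred P] {s : ℂ}

theorem summable_norm_restrictedZetaSummand (hs : 1 < s.re) :
    Summable (‖restrictedZetaSummand P s ·‖) := by
  refine (summable_riemannZetaSummand hs).of_nonneg_of_le (fun _ => norm_nonneg _) fun n => ?_
  unfold restrictedZetaSummand
  split_ifs
  · exact le_rfl
  · exact norm_zero.trans_le (norm_nonneg _)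

theorem restrictedZetaSummand_mul_of_coprime
    (hP : ∀ {m n : ℕ}, m.Coprime n → (P (m * n) ↔ P m ∧ P n)) {m n : ℕ} (h : m.Coprime n) :
    restrictedZetaSummand P s (m * n) =
      restrictedZetaSummand P s m * restrictedZetaSummand P s n := by
  rcases Nat.eq_zero_or_pos m with rfl | hm
  · simp [restrictedZetaSummand]
  rcases Nat.eq_zero_or_pos n with rfl | hn
  · simp [restrictedZetaSummand]
  simp only [restrictedZetaSummand, hP h, Nat.one_le_iff_ne_zero, hm.ne', hn.ne',
    mul_ne_zero_iff, ne_eq, not_false_eq_true, true_and, Nat.cast_mul,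
    Complex.natCast_mul_natCast_cpow]
  split_ifs <;> simp_all

theorem restrictedZetaSummand_pow {p : ℕ} (hp : p ≠ 0) (e : ℕ) :
    restrictedZetaSummand P s (p ^ e) = if P (p ^ e) then ((p : ℂ) ^ (-s)) ^ e else 0 := by
  simp only [restrictedZetaSummand, Nat.one_le_iff_ne_zero, pow_ne_zero e hp, ne_eq,
    not_false_eq_true, true_and, Nat.cast_pow, ← Complex.natCast_cpow_natCast_mul,
    Complex.cpow_nat_mul]

theorem hasProd_restrictedZetaSummand (h1 : P 1)
    (hP : ∀ {m n : ℕ}, m.Coprime n → (P (m * n) ↔ P m ∧ P n)) (hs : 1 < s.re) :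
    HasProd (fun p : Nat.Primes => ∑' e, restrictedZetaSummand P s (p ^ e))
      (∑' n, restrictedZetaSummand P s n) :=
  EulerProduct.eulerProduct_hasProd (by simp [restrictedZetaSummand, h1])
    (restrictedZetaSummand_mul_of_coprime P hP) (summable_norm_restrictedZetaSummand P hs)
    (by simp [restrictedZetaSummand])

end restrictedZetaSummand

theorem not_dvd_sigmak_mul_iff {q : ℕ} (hq : q.Prime) (k : ℕ) {m n : ℕ} (h : m.Coprime n) :
    ¬ q ∣ sigmak k (m * n) ↔ ¬ q ∣ sigmak k m ∧ ¬ q ∣ sigmak k n := by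
  rw [sigmak_mul_of_coprime k h, hq.dvd_mul, not_or]

theorem tsum_restrictedZetaSummand_not_dvd_sigmak_pow_self {q k : ℕ} (hq : q.Prime)
    (hk : k ≠ 0) {s : ℂ} (hs : 1 < s.re) :
    ∑' e, restrictedZetaSummand (¬ q ∣ sigmak k ·) s (q ^ e) = (1 - (q : ℂ) ^ (-s))⁻¹ := by
  simp only [restrictedZetaSummand_pow _ hq.ne_zero, not_dvd_sigmak_prime_pow_self hq hk,
    not_false_eq_true, if_true]
  exact tsum_geometric_of_norm_lt_one
    ((Complex.norm_prime_cpow_le_one_half ⟨q, hq⟩ hs).trans_lt (by norm_num))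

theorem tsum_restrictedZetaSummand_not_dvd_sigmak_pow {q p : ℕ} (hq : q.Prime) (hp : p.Prime)
    (hpq : p ≠ q) (k : ℕ) {s : ℂ} (hs : 1 < s.re) :
    ∑' e, restrictedZetaSummand (¬ q ∣ sigmak k ·) s (p ^ e) = Tfactor q (k.gcd (q - 1)) s p := by
  have hqp : ¬ q ∣ p := fun h => hpq ((Nat.prime_dvd_prime_iff_eq hq hp).mp h).symm
  simp only [restrictedZetaSummand_pow _ hp.ne_zero, dvd_sigmak_prime_pow_iff hq hp, ite_not]
  rw [tsum_ite_dvd_add_one_zero_pow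
      ((Complex.norm_prime_cpow_le_one_half ⟨p, hp⟩ hs).trans_lt (by norm_num))
      (mup_ne_zero hq hqp k),
    Tfactor, if_neg hpq, mup_gcd_card_sub_one hq hqp, ← mul_neg, ← mul_neg, Complex.cpow_nat_mul,
    Complex.cpow_nat_mul]

theorem statement9_general (q k : ℕ) (hq : q.Prime) (hk : 1 ≤ k)
    (s : ℂ) (hs : 1 < s.re) :
    Summable (fun n : ℕ => if 1 ≤ n ∧ ¬ q ∣ sigmak k n then (n : ℂ) ^ (-s) else 0) ∧
    Multipliable (fun p : Nat.Primes => Tfactor q (Nat.gcd k (q - 1)) s (p : ℕ)) ∧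
    (∑' n : ℕ, if 1 ≤ n ∧ ¬ q ∣ sigmak k n then (n : ℂ) ^ (-s) else 0) =
      (1 - (q : ℂ) ^ (-s))⁻¹ *
        ∏' p : Nat.Primes, Tfactor q (Nat.gcd k (q - 1)) s (p : ℕ) := by
  classical
  set P : ℕ → Prop := (¬ q ∣ sigmak k ·)
  change Summable (restrictedZetaSummand P s) ∧ _ ∧ ∑' n, restrictedZetaSummand P s n = _
  have hEuler := hasProd_restrictedZetaSummand P (by simp [P, sigmak, hq.one_lt.ne'])
    (not_dvd_sigmak_mul_iff hq k) hs
  set c := 1 - (q : ℂ) ^ (-s)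
  have hc : c ≠ 0 := Complex.one_sub_prime_cpow_ne_zero hq hs
  have hfactor : (fun p : Nat.Primes => Tfactor q (k.gcd (q - 1)) s p) = fun p : Nat.Primes =>
      (∑' e, restrictedZetaSummand P s ((p : ℕ) ^ e)) * if p = ⟨q, hq⟩ then c else 1 := by
    funext p
    split_ifs with hpq
    · rw [hpq, tsum_restrictedZetaSummand_not_dvd_sigmak_pow_self hq (by omega) hs,
        inv_mul_cancel₀ hc, Tfactor, if_pos rfl]
    · rw [mul_one, tsum_restrictedZetaSummand_not_dvd_sigmak_pow hq p.prop
        (fun h => hpq (Subtype.ext h)) k hs]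
  have hprod : HasProd (fun p : Nat.Primes => Tfactor q (k.gcd (q - 1)) s p)
      ((∑' n, restrictedZetaSummand P s n) * c) := by
    rw [hfactor]
    exact hEuler.mul (hasProd_ite_eq _ c)
  refine ⟨(summable_norm_restrictedZetaSummand P hs).of_norm, hprod.multipliable, ?_⟩
  rw [hprod.tprod_eq, mul_comm, mul_inv_cancel_right₀ hc]

/-- For `q` an odd prime, `k ≥ 1`, `r = gcd(k, q−1)`, and `Re(s) > 1`:
`∑_{n ≥ 1, q ∤ σ_k(n)} n^{−s}
  = (1−q^{−s})^{−1} ∏_{p ≠ q} (1−p^{−(μ_p−1)s}) / ((1−p^{−s})(1−p^{−μ_p s}))`,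
both sides converging absolutely. -/
theorem statement9 (q k : ℕ) (hq : q.Prime) (hq_odd : q ≠ 2) (hk : 1 ≤ k)
    (s : ℂ) (hs : 1 < s.re) :
    Summable (fun n : ℕ => if 1 ≤ n ∧ ¬ q ∣ sigmak k n then (n : ℂ) ^ (-s) else 0) ∧
    Multipliable (fun p : Nat.Primes => Tfactor q (Nat.gcd k (q - 1)) s (p : ℕ)) ∧
    (∑' n : ℕ, if 1 ≤ n ∧ ¬ q ∣ sigmak k n then (n : ℂ) ^ (-s) else 0) =
      (1 - (q : ℂ) ^ (-s))⁻¹ *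
        ∏' p : Nat.Primes, Tfactor q (Nat.gcd k (q - 1)) s (p : ℕ) :=
  statement9_general q k hq hk s hs
end

section
/- Let q be an odd prime, m a divisor of q−1, and h = (q−1)/m. Then the congruence x^m ≡ 1 (mod q) has exactly m solutions modulo q; the congruence x^m ≡ −1 (mod q) has exactly m solutions modulo q if h is even, and no solutions if h is odd. Moreover, if m is even, then each of these two congruences has at most m/2 solutions that are prime numbers p with p < q−2. -/
/-!
The units of `ZMod q` form a cyclic group of order `q - 1 = m h`, so there is a primitive `m`-th
root of unity, and then `x ^ m = a` (with `a ≠ 0`) has either exactly `m` solutions or none.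
A solution of `x ^ m = -1` gives `(-1) ^ h = x ^ (q - 1) = 1`, so `h` is even; conversely, for
even `h` and a generator `g`, `g ^ (h / 2)` is a solution.

For even `m` both solution sets are stable under `x ↦ -x`. Two primes `p, p' < q - 2` are never
negatives of each other mod `q`: that would mean `p + p' = q`, which is odd, so one of them would
be `2` and the other `q - 2`. Hence the prime solutions fill at most half of each solution set.
-/

open Polynomial Pointwise

lemma FiniteField.exists_isPrimitiveRoot_of_dvd {K : Type*} [Field K] [Finite K] {m : ℕ}
    (hm : m ∣ Nat.card K - 1) : ∃ ζ : K, IsPrimitiveRoot ζ m := by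
  obtain ⟨g, hg⟩ := IsCyclic.exists_ofOrder_eq_natCard (α := Kˣ)
  obtain ⟨h, hmh⟩ := hm
  have hpos : 0 < Nat.card K - 1 := Nat.sub_pos_of_lt Finite.one_lt_card
  have hζ : IsPrimitiveRoot (g : K) (Nat.card K - 1) := by
    rw [IsPrimitiveRoot.coe_units_iff, ← Nat.card_units, ← hg]
    exact IsPrimitiveRoot.orderOf g
  exact ⟨_, hζ.pow hpos (hmh.trans (mul_comm m h))⟩

open scoped Classical in
lemma IsPrimitiveRoot.natCard_pow_eq {R : Type*} [CommRing R] [IsDomain R] {ζ : R} {n : ℕ}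
    (hζ : IsPrimitiveRoot ζ n) (hn : 0 < n) {a : R} (ha : a ≠ 0) :
    Nat.card {x : R | x ^ n = a} = if ∃ α : R, α ^ n = a then n else 0 := by
  have hroots : {x : R | x ^ n = a} = nthRootsFinset n a := by
    ext; simp [Polynomial.mem_nthRootsFinset hn]
  rw [hroots, Nat.card_coe_set_eq, Set.ncard_coe_finset, nthRootsFinset_def,
    Multiset.toFinset_card_of_nodup (hζ.nthRoots_nodup ha), hζ.card_nthRoots]

lemma IsPrimitiveRoot.exists_pow_eq_neg_one {R : Type*} [CommRing R] [IsDomain R] {ζ : R}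
    {m h : ℕ} (hζ : IsPrimitiveRoot ζ (m * h)) (hmh : 0 < m * h) (hh : Even h) :
    ∃ α : R, α ^ m = -1 := by
  obtain ⟨k, rfl⟩ := hh
  have hk : m * (k + k) / (m * k) = 2 := by
    rw [← two_mul, mul_left_comm, Nat.mul_div_cancel _ (by grind)]
  refine ⟨ζ ^ k, ?_⟩
  rw [← pow_mul, mul_comm]
  exact (hk ▸ hζ.pow_of_dvd (by grind) ⟨2, by ring⟩).eq_neg_one_of_two_right

lemma FiniteField.exists_pow_eq_neg_one_iff {K : Type*} [Field K] [Finite K]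
    (hK : (-1 : K) ≠ 1) {m h : ℕ} (hmh : m * h = Nat.card K - 1) :
    (∃ α : K, α ^ m = -1) ↔ Even h := by
  constructor
  · rintro ⟨α, hα⟩
    have hα0 : α ≠ 0 := by
      rintro rfl
      rcases m.eq_zero_or_pos with rfl | hm
      · exact hK (by simpa using hα.symm)
      · simp [zero_pow hm.ne'] at hα
    rw [← neg_one_pow_eq_one_iff_even hK, ← hα, ← pow_mul, hmh, ← Nat.card_units]
    exact congrArg Units.val (pow_card_eq_one' (x := Units.mk0 α hα0))
  · intro hh
    obtain ⟨ζ, hζ⟩ := exists_isPrimitiveRoot_of_dvd (K := K) (dvd_of_eq hmh)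
    refine hζ.exists_pow_eq_neg_one ?_ hh
    rw [hmh]
    exact Nat.sub_pos_of_lt Finite.one_lt_card

lemma Nat.Prime.not_dvd_add_of_lt_sub_two {q p p' : ℕ} (hq : Odd q) (hp : p.Prime)
    (hp' : p'.Prime) (hpq : p < q - 2) (hp'q : p' < q - 2) : ¬ q ∣ p + p' := by
  rintro ⟨k, hk⟩
  have hsum : p + p' = q := by
    have := hp.two_le
    rcases k with _ | _ | k
    · omega
    · omega
    · have : q * 2 ≤ q * (k + 1 + 1) := Nat.mul_le_mul_left q (by omega)
      omega
  rcases hp.eq_two_or_odd' with rfl | hpo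
  · omega
  rcases hp'.eq_two_or_odd' with rfl | hp'o
  · omega
  have : Even q := hsum ▸ hpo.add_odd hp'o
  exact Nat.not_even_iff_odd.mpr hq this

lemma two_mul_ncard_le_of_disjoint_neg {G : Type*} [AddGroup G] {S T : Set G}
    (hS : S.Finite) (hTS : T ⊆ S) (hSneg : -S ⊆ S) (hT : Disjoint T (-T)) :
    2 * T.ncard ≤ S.ncard := by
  calc 2 * T.ncard = (T ∪ -T).ncard := by
        rw [Set.ncard_union_eq hT (hS.subset hTS) (hS.subset hTS).neg, Set.ncard_neg, two_mul]
    _ ≤ S.ncard :=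
        Set.ncard_le_ncard (Set.union_subset hTS ((Set.neg_subset_neg.2 hTS).trans hSneg)) hS

lemma natCard_primes_lt_sub_two_le {q : ℕ} (hq : Odd q) {S : Set (ZMod q)} (hS : -S ⊆ S) :
    Nat.card {p : ℕ | p.Prime ∧ p < q - 2 ∧ (p : ZMod q) ∈ S} ≤ Nat.card S / 2 := by
  have : NeZero q := ⟨by rintro rfl; exact Nat.not_odd_zero hq⟩
  set P := {p : ℕ | p.Prime ∧ p < q - 2 ∧ (p : ZMod q) ∈ S}
  have hinj : Set.InjOn (Nat.cast : ℕ → ZMod q) P := fun p hp p' hp' h => by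
    have := hp.2.1
    have := hp'.2.1
    simpa [ZMod.val_natCast_of_lt (by omega : p < q), ZMod.val_natCast_of_lt (by omega : p' < q)]
      using congrArg ZMod.val h
  have hdisj : Disjoint (Nat.cast '' P) (-(Nat.cast '' P) : Set (ZMod q)) := by
    rw [Set.disjoint_left]
    rintro _ ⟨p, hp, rfl⟩ ⟨p', hp', hp'p⟩
    apply hp.1.not_dvd_add_of_lt_sub_two hq hp'.1 hp.2.1 hp'.2.1
    rw [← ZMod.natCast_eq_zero_iff]
    push_cast
    rw [hp'p]
    ring
  rw [Nat.le_div_iff_mul_le two_pos, mul_comm, Nat.card_coe_set_eq, Nat.card_coe_set_eq,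
    ← hinj.ncard_image]
  exact two_mul_ncard_le_of_disjoint_neg (Set.toFinite S)
    (Set.image_subset_iff.2 fun _ hp => hp.2.2) hS hdisj

/-- For `q` an odd prime, `m ∣ q−1` and `h = (q−1)/m`: `x^m ≡ 1 (mod q)`
has exactly `m` solutions; `x^m ≡ −1 (mod q)` has exactly `m` solutions if `h` is even and
none if `h` is odd; and if `m` is even, each congruence has at most `m/2` prime solutions
`p < q−2`. -/
theorem statement12 (q m : ℕ) (hq : q.Prime) (hq_odd : q ≠ 2) (hm : m ∣ q - 1) :
    Nat.card {x : ZMod q | x ^ m = 1} = m ∧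
    Nat.card {x : ZMod q | x ^ m = -1} = (if 2 ∣ (q - 1) / m then m else 0) ∧
    (2 ∣ m →
      Nat.card {p : ℕ | p.Prime ∧ p < q - 2 ∧ (p : ZMod q) ^ m = 1} ≤ m / 2 ∧
      Nat.card {p : ℕ | p.Prime ∧ p < q - 2 ∧ (p : ZMod q) ^ m = -1} ≤ m / 2) := by
  have : Fact q.Prime := ⟨hq⟩
  have hq2 : 2 < q := by have := hq.two_le; omega
  have : Fact (2 < q) := ⟨hq2⟩
  have hcard : Nat.card (ZMod q) = q := Nat.card_zmod q
  have hm0 : 0 < m := Nat.pos_of_dvd_of_pos hm (by omega)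
  obtain ⟨ζ, hζ⟩ := FiniteField.exists_isPrimitiveRoot_of_dvd (K := ZMod q) (hcard ▸ hm)
  have hone : Nat.card {x : ZMod q | x ^ m = 1} = m := by
    rw [hζ.natCard_pow_eq hm0 one_ne_zero, if_pos ⟨1, one_pow m⟩]
  have hneg_one : Nat.card {x : ZMod q | x ^ m = -1} = if 2 ∣ (q - 1) / m then m else 0 := by
    obtain ⟨h, hmh⟩ := hm
    have hsolvable : (∃ α : ZMod q, α ^ m = -1) ↔ 2 ∣ h := by
      rw [← even_iff_two_dvd]
      exact FiniteField.exists_pow_eq_neg_one_iff ZMod.neg_one_ne_one (by rw [hcard, hmh])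
    rw [hζ.natCard_pow_eq hm0 (neg_ne_zero.2 one_ne_zero), hmh, Nat.mul_div_cancel_left h hm0]
    simp only [hsolvable]
  have hneg_closed (a : ZMod q) (hm2 : 2 ∣ m) : -{x : ZMod q | x ^ m = a} ⊆ {x | x ^ m = a} :=
    fun x hx => by simpa [(even_iff_two_dvd.2 hm2).neg_pow] using hx
  have hq_odd' : Odd q := hq.odd_of_ne_two hq_odd
  refine ⟨hone, hneg_one, fun hm2 => ⟨?_, ?_⟩⟩
  · calc _ ≤ Nat.card {x : ZMod q | x ^ m = 1} / 2 :=
          natCard_primes_lt_sub_two_le hq_odd' (hneg_closed 1 hm2)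
      _ = m / 2 := by rw [hone]
  · calc _ ≤ Nat.card {x : ZMod q | x ^ m = -1} / 2 :=
          natCard_primes_lt_sub_two_le hq_odd' (hneg_closed (-1) hm2)
      _ ≤ m / 2 := Nat.div_le_div_right (by rw [hneg_one]; split_ifs <;> omega)
end

section
/- Let m ≥ 1 be an integer, q an odd prime, p a prime with p ≠ q, and let g_p be the multiplicative order of p^m modulo q. If g_p is even and d > 1 is an odd divisor of g_p, then p^{g_p·m/(2d)} + 1 divides p^{g_p·m/2} + 1 and the quotient (p^{g_p·m/2} + 1)/(p^{g_p·m/(2d)} + 1) is a positive integer multiple of q. -/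
open Filter Topology

/-- For `m ≥ 1`, `q` an odd prime, `p ≠ q` prime, `g_p` even and `d > 1` an
odd divisor of `g_p`: `p^{g_p·m/(2d)} + 1` divides `p^{g_p·m/2} + 1` and the quotient is a
positive integer multiple of `q`. -/
theorem statement14 (m q p : ℕ) (hm : 1 ≤ m) (hq : q.Prime) (hq_odd : q ≠ 2)
    (hp : p.Prime) (hpq : p ≠ q) (heven : 2 ∣ gp q m p)
    (d : ℕ) (hd : d ∣ gp q m p) (hodd : Odd d) (hd1 : 1 < d) :
    (p ^ (gp q m p * m / (2 * d)) + 1) ∣ (p ^ (gp q m p * m / 2) + 1) ∧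
    q ∣ (p ^ (gp q m p * m / 2) + 1) / (p ^ (gp q m p * m / (2 * d)) + 1) ∧
    0 < (p ^ (gp q m p * m / 2) + 1) / (p ^ (gp q m p * m / (2 * d)) + 1) := by
  haveI : Fact q.Prime := ⟨hq⟩
  set g := gp q m p with hg
  set x : ZMod q := (p : ZMod q) ^ m with hx
  -- p is nonzero mod q
  have hpne : (p : ZMod q) ≠ 0 := by
    rw [Ne, ZMod.natCast_eq_zero_iff]
    intro h
    exact hpq ((Nat.prime_dvd_prime_iff_eq hq hp).mp h).symm
  have hxne : x ≠ 0 := pow_ne_zero _ hpne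
  have hxpow : x ^ (q - 1) = 1 := ZMod.pow_card_sub_one_eq_one hxne
  have hq1 : 0 < q - 1 := by
    have := hq.two_le; omega
  have hfin : IsOfFinOrder x := isOfFinOrder_iff_pow_eq_one.mpr ⟨q - 1, hq1, hxpow⟩
  have hgpos : 0 < g := hfin.orderOf_pos
  -- 2d divides g
  have h2d : 2 * d ∣ g := Nat.Coprime.mul_dvd_of_dvd_of_dvd
    (Nat.coprime_two_left.mpr hodd) heven hd
  obtain ⟨k, hk⟩ := h2d
  have hdpos : 0 < d := by omega
  have hkpos : 0 < k := by
    rcases Nat.eq_zero_or_pos k with h | h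
    · rw [h, mul_zero] at hk; omega
    · exact h
  have hE2d : g * m / (2 * d) = k * m := by
    rw [hk, mul_assoc]
    exact Nat.mul_div_cancel_left _ (by positivity)
  have hE2 : g * m / 2 = d * k * m := by
    rw [hk]
    have h2 : 2 * d * k * m = 2 * (d * k * m) := by ring
    rw [h2]
    exact Nat.mul_div_cancel_left _ (by norm_num)
  have hexp : g * m / 2 = (g * m / (2 * d)) * d := by
    rw [hE2d, hE2]; ring
  set a := p ^ (g * m / (2 * d)) with ha
  have hdvd : a + 1 ∣ p ^ (g * m / 2) + 1 := by
    have := Odd.nat_add_dvd_pow_add_pow a 1 hodd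
    simpa [hexp, pow_mul] using this
  refine ⟨hdvd, ?_, ?_⟩
  · -- q divides the quotient
    have hxg2 : x ^ (g / 2) = -1 := by
      have hg2 : g / 2 = d * k := by
        rw [hk]
        have h2 : 2 * d * k = 2 * (d * k) := by ring
        rw [h2]
        exact Nat.mul_div_cancel_left _ (by norm_num)
      have hg2ne : g / 2 ≠ 0 := by
        rw [hg2]; positivity
      have hord : orderOf (x ^ (g / 2)) = 2 := by
        rw [orderOf_pow_of_dvd hg2ne (Nat.div_dvd_of_dvd heven)]
        show g / (g / 2) = 2
        exact Nat.div_div_self heven (by omega)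
      have hsq : (x ^ (g / 2)) * (x ^ (g / 2)) = 1 := by
        have h := pow_orderOf_eq_one (x ^ (g / 2))
        rw [hord, sq] at h
        exact h
      have hne1 : x ^ (g / 2) ≠ 1 := by
        intro h
        have := orderOf_eq_one_iff.mpr h
        omega
      rcases mul_self_eq_one_iff.mp hsq with h | h
      · exact absurd h hne1
      · exact h
    -- q ∣ p ^ (g*m/2) + 1
    have hqB : q ∣ p ^ (g * m / 2) + 1 := by
      rw [← ZMod.natCast_eq_zero_iff]
      push_cast
      have hg2 : g / 2 = d * k := by
        rw [hk]
        have h2 : 2 * d * k = 2 * (d * k) := by ring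
        rw [h2]
        exact Nat.mul_div_cancel_left _ (by norm_num)
      have : g * m / 2 = m * (g / 2) := by
        rw [hE2, hg2]; ring
      rw [this, pow_mul, ← hx, hxg2]
      ring
    -- q does not divide a + 1
    have hqA : ¬ q ∣ a + 1 := by
      intro h
      rw [← ZMod.natCast_eq_zero_iff] at h
      rw [ha] at h
      push_cast at h
      have hA : (p : ZMod q) ^ (g * m / (2 * d)) = -1 := by
        linear_combination h
      rw [hE2d, mul_comm, pow_mul, ← hx] at hA
      have hx2k : x ^ (2 * k) = 1 := by
        rw [mul_comm, pow_mul, hA]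
        ring
      have : g ∣ 2 * k := orderOf_dvd_of_pow_eq_one hx2k
      rw [hk] at this
      have := Nat.le_of_dvd (by positivity) this
      nlinarith
    obtain ⟨c, hc⟩ := hdvd
    rw [hc, Nat.mul_div_cancel_left _ (by positivity)]
    rw [hc] at hqB
    rcases (Nat.Prime.dvd_mul hq).mp hqB with h | h
    · exact absurd h hqA
    · exact h
  · exact Nat.div_pos (Nat.le_of_dvd (by positivity) hdvd) (by positivity)
end

section
/- Let q be an odd prime, k ≥ 1 an integer, and p a prime with p ≠ q; put r = gcd(k, q−1), let g_p be the multiplicative order of p^r modulo q, and set μ_p := q if g_p = 1 and μ_p := g_p if g_p > 1. Then for every integer a ≥ 0, q divides σ_k(p^a) if and only if a ≡ −1 (mod μ_p). Moreover, q does not divide σ_k(q^a) for any a ≥ 0. -/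
open Filter Topology

/-- For `q` an odd prime, `k ≥ 1`, `p ≠ q` prime, `r = gcd(k, q−1)`,
`g_p` the order of `p^r` mod `q` and `μ_p` as above: for every `a ≥ 0`, `q ∣ σ_k(p^a)` iff
`a ≡ −1 (mod μ_p)`; moreover `q ∤ σ_k(q^a)` for every `a ≥ 0`. -/
theorem statement15 (q k p : ℕ) (hq : q.Prime) (hq_odd : q ≠ 2) (hk : 1 ≤ k)
    (hp : p.Prime) (hpq : p ≠ q) :
    (∀ a : ℕ, (q ∣ sigmak k (p ^ a) ↔ mup q (Nat.gcd k (q - 1)) p ∣ a + 1)) ∧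
    (∀ a : ℕ, ¬ q ∣ sigmak k (q ^ a)) := by
  haveI : Fact q.Prime := ⟨hq⟩
  set r := Nat.gcd k (q - 1) with hr
  set x : ZMod q := (p : ZMod q) with hxdef
  have hk0 : k ≠ 0 := by omega
  have hr0 : r ≠ 0 := by
    simp [hr, Nat.gcd_eq_zero_iff, hk0]
  have hx : x ≠ 0 := by
    rw [hxdef, Ne, ZMod.natCast_eq_zero_iff]
    intro h
    exact hpq ((Nat.prime_dvd_prime_iff_eq hq hp).mp h).symm
  have hxq : x ^ (q - 1) = 1 := ZMod.pow_card_sub_one_eq_one hx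
  have hord : orderOf x ∣ q - 1 := orderOf_dvd_of_pow_eq_one hxq
  -- order of x^k equals order of x^r
  have hgcd : Nat.gcd (orderOf x) k = Nat.gcd (orderOf x) r := by
    conv_lhs => rw [← Nat.gcd_eq_left hord]
    rw [hr, Nat.gcd_comm k (q - 1), Nat.gcd_assoc]
  have hkey : orderOf (x ^ k) = gp q r p := by
    rw [gp, ← hxdef, orderOf_pow' x hk0, orderOf_pow' x hr0, hgcd]
  have hsig : ∀ a : ℕ, ((sigmak k (p ^ a) : ℕ) : ZMod q)
      = ∑ i ∈ Finset.range (a + 1), (x ^ k) ^ i := by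
    intro a
    rw [sigmak, Nat.sum_divisors_prime_pow hp]
    push_cast
    congr 1
    ext i
    rw [← pow_mul, ← pow_mul, mul_comm]
  constructor
  · intro a
    rw [← ZMod.natCast_eq_zero_iff, hsig a]
    by_cases hy : x ^ k = 1
    · have hg1 : gp q r p = 1 := by rw [← hkey, hy, orderOf_one]
      rw [mup, if_pos hg1]
      simp only [hy, one_pow, Finset.sum_const, Finset.card_range, nsmul_eq_mul, mul_one]
      rw [show ((a + 1 : ℕ) : ZMod q) = ((a : ℕ) : ZMod q) + 1 by push_cast; ring] at *
      rw [← Nat.cast_one, ← Nat.cast_add, ZMod.natCast_eq_zero_iff]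
    · have hg1 : gp q r p ≠ 1 := by
        rw [← hkey]; simpa using hy
      rw [mup, if_neg hg1, ← hkey]
      rw [geom_sum_eq hy (a + 1), div_eq_zero_iff, sub_eq_zero, sub_eq_zero]
      constructor
      · rintro (h | h)
        · exact orderOf_dvd_of_pow_eq_one h
        · exact absurd h hy
      · intro h
        exact Or.inl (orderOf_dvd_iff_pow_eq_one.mp h)
  · intro a hdvd
    rw [← ZMod.natCast_eq_zero_iff] at hdvd
    rw [sigmak, Nat.sum_divisors_prime_pow hq] at hdvd
    push_cast at hdvd
    have : ∀ i ∈ Finset.range (a + 1), ((q : ZMod q) ^ i) ^ k = if i = 0 then 1 else 0 := by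
      intro i _
      rcases Nat.eq_zero_or_pos i with hi | hi
      · simp [hi]
      · simp [ZMod.natCast_self, zero_pow hi.ne', zero_pow hk0, if_neg hi.ne']
    rw [Finset.sum_congr rfl this] at hdvd
    simp at hdvd
end
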